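/- For the family ρ(α,β) = α·(|0⟩⟨0|⊗𝟙/d_B) + β·(𝟙/d_A⊗|0⟩⟨0|) + (1−α−β)·|00⟩⟨00| with α,β ≥ 0, α+β ≤ 1, one has S_L(ρ_A) = D_A(2β−β²), S_L(ρ_B) = D_B(2α−α²), and S_L(ρ(α,β)) = D_B(2α−α²) + D_A(2β−β²) − 2 D_A D_B αβ, where D_A=(d_A−1)/d_A, D_B=(d_B−1)/d_B; these values saturate dimensionally sharp subadditivity: S_L(ρ(α,β)) = S_L(ρ_A)+S_L(ρ_B) − 2 D_A D_B (1−√(1−S_L(ρ_A)/D_A))(1−√(1−S_L(ρ_B)/D_B)). -/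

import Mathlib

/-!
Every summand of `ρ(α,β)` is diagonal in the product basis, so `ρ` and its marginals are
diagonal and their purities are sums of squares of explicit weights. The marginals are
`(1-β)|0⟩⟨0| + β𝟙/d_A` and `(1-α)|0⟩⟨0| + α𝟙/d_B`, so `1 - S_L(ρ_A)/D_A = (1-β)²` and
`1 - S_L(ρ_B)/D_B = (1-α)²`: the square roots in the subadditivity bound collapse to `β` and `α`.
-/

open Matrix
open scoped ComplexOrder Kronecker

noncomputable def linEntropy {n : Type*} [Fintype n] (ρ : Matrix n n ℂ) : ℝ :=
  1 - ((ρ * ρ).trace).re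

noncomputable def ptraceB {dA dB : ℕ} (ρ : Matrix (Fin dA × Fin dB) (Fin dA × Fin dB) ℂ) :
    Matrix (Fin dA) (Fin dA) ℂ := fun i j => ∑ k, ρ (i, k) (j, k)

noncomputable def ptraceA {dA dB : ℕ} (ρ : Matrix (Fin dA × Fin dB) (Fin dA × Fin dB) ℂ) :
    Matrix (Fin dB) (Fin dB) ℂ := fun i j => ∑ k, ρ (k, i) (k, j)

theorem linEntropy_diagonal_ofReal {n : Type*} [Fintype n] [DecidableEq n] (f : n → ℝ) :
    linEntropy (diagonal fun i => (f i : ℂ)) = 1 - ∑ i, f i ^ 2 := by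
  simp [linEntropy, diagonal_mul_diagonal, trace_diagonal, sq]

theorem ptraceB_diagonal {dA dB : ℕ} (f : Fin dA × Fin dB → ℂ) :
    ptraceB (diagonal f) = diagonal fun i => ∑ k, f (i, k) := by
  ext i j
  rcases eq_or_ne i j with rfl | h <;> simp [ptraceB, *]

theorem ptraceA_diagonal {dA dB : ℕ} (f : Fin dA × Fin dB → ℂ) :
    ptraceA (diagonal f) = diagonal fun k => ∑ i, f (i, k) := by
  ext k l
  rcases eq_or_ne k l with rfl | h <;> simp [ptraceA, *]

theorem sum_sq_single_add_const {ι : Type*} [Fintype ι] [DecidableEq ι] (j : ι) (a b : ℝ) :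
    ∑ i, ((Pi.single j a : ι → ℝ) i + b) ^ 2 = a ^ 2 + 2 * a * b + Fintype.card ι * b ^ 2 := by
  have hsq (i : ι) : ((Pi.single j a : ι → ℝ) i + b) ^ 2
      = (Pi.single j (a ^ 2 + 2 * a * b) : ι → ℝ) i + b ^ 2 := by
    rcases eq_or_ne i j with rfl | h <;> simp [*]
    ring
  simp [hsq, Finset.sum_add_distrib]

theorem one_sub_sqrt_one_sub_mul_div {D x : ℝ} (hD : D ≠ 0) (hx : x ≤ 1) :
    1 - √(1 - D * (2 * x - x ^ 2) / D) = x := by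
  rw [mul_div_cancel_left₀ _ hD, show 1 - (2 * x - x ^ 2) = (1 - x) ^ 2 by ring,
    Real.sqrt_sq (by linarith)]
  ring

section Family

variable {dA dB : ℕ} (i₀ : Fin dA) (k₀ : Fin dB) (α β : ℝ)

noncomputable def familyState : Matrix (Fin dA × Fin dB) (Fin dA × Fin dB) ℂ :=
  (α : ℂ) • (single i₀ i₀ (1 : ℂ) ⊗ₖ ((dB : ℂ)⁻¹ • (1 : Matrix (Fin dB) (Fin dB) ℂ)))
    + (β : ℂ) • (((dA : ℂ)⁻¹ • (1 : Matrix (Fin dA) (Fin dA) ℂ)) ⊗ₖ single k₀ k₀ (1 : ℂ))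
    + ((1 - α - β : ℝ) : ℂ) • single (i₀, k₀) (i₀, k₀) (1 : ℂ)

noncomputable def familyWeight (p : Fin dA × Fin dB) : ℝ :=
  (Pi.single i₀ (α / dB) : Fin dA → ℝ) p.1 + (Pi.single k₀ (β / dA) : Fin dB → ℝ) p.2
    + (Pi.single (i₀, k₀) (1 - α - β) : Fin dA × Fin dB → ℝ) p

theorem familyState_eq_diagonal :
    familyState i₀ k₀ α β = diagonal fun p => (familyWeight i₀ k₀ α β p : ℂ) := by
  simp only [familyState, ← diagonal_single, ← diagonal_one, ← diagonal_smul,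
    diagonal_kronecker_diagonal, diagonal_add]
  congr 1
  funext ⟨i, k⟩
  simp [familyWeight, Pi.single_apply]
  split_ifs <;> simp_all <;> ring

theorem sum_familyWeight_right (i : Fin dA) :
    ∑ k, familyWeight i₀ k₀ α β (i, k) = (Pi.single i₀ (1 - β) : Fin dA → ℝ) i + β / dA := by
  have : (dB : ℝ) ≠ 0 := by exact_mod_cast k₀.pos.ne'
  rcases eq_or_ne i i₀ with rfl | h <;>
    simp [familyWeight, Finset.sum_add_distrib, Pi.single_apply, *]
  field_simp; ring

theorem sum_familyWeight_left (k : Fin dB) :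
    ∑ i, familyWeight i₀ k₀ α β (i, k) = (Pi.single k₀ (1 - α) : Fin dB → ℝ) k + α / dB := by
  have : (dA : ℝ) ≠ 0 := by exact_mod_cast i₀.pos.ne'
  rcases eq_or_ne k k₀ with rfl | h <;>
    simp [familyWeight, Finset.sum_add_distrib, Pi.single_apply, *]
  field_simp; ring

theorem sum_sq_familyWeight :
    ∑ p, familyWeight i₀ k₀ α β p ^ 2 = α ^ 2 / dB + β ^ 2 / dA + (1 - α - β) ^ 2
      + 2 * α * β / (dA * dB) + 2 * α * (1 - α - β) / dB + 2 * β * (1 - α - β) / dA := by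
  have hdA : (dA : ℝ) ≠ 0 := by exact_mod_cast i₀.pos.ne'
  have hdB : (dB : ℝ) ≠ 0 := by exact_mod_cast k₀.pos.ne'
  have hrow (i : Fin dA) (k : Fin dB) : familyWeight i₀ k₀ α β (i, k)
      = (Pi.single k₀ ((Pi.single i₀ (1 - α - β) : Fin dA → ℝ) i + β / dA) : Fin dB → ℝ) k
        + (Pi.single i₀ (α / dB) : Fin dA → ℝ) i := by
    rcases eq_or_ne i i₀ with rfl | h <;> rcases eq_or_ne k k₀ with rfl | h' <;>
      simp [familyWeight, *]
    ring
  simp only [Fintype.sum_prod_type, hrow, sum_sq_single_add_const, Finset.sum_add_distrib,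
    Fintype.card_fin]
  simp [Pi.single_apply, mul_ite, Finset.sum_ite_eq']
  field_simp; ring

theorem linEntropy_ptraceB_familyState :
    linEntropy (ptraceB (familyState i₀ k₀ α β)) = (dA - 1) / dA * (2 * β - β ^ 2) := by
  have : (dA : ℝ) ≠ 0 := by exact_mod_cast i₀.pos.ne'
  simp only [familyState_eq_diagonal, ptraceB_diagonal, ← Complex.ofReal_sum,
    sum_familyWeight_right, linEntropy_diagonal_ofReal, sum_sq_single_add_const, Fintype.card_fin]
  field_simp
  ring

theorem linEntropy_ptraceA_familyState :
    linEntropy (ptraceA (familyState i₀ k₀ α β)) = (dB - 1) / dB * (2 * α - α ^ 2) := by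
  have : (dB : ℝ) ≠ 0 := by exact_mod_cast k₀.pos.ne'
  simp only [familyState_eq_diagonal, ptraceA_diagonal, ← Complex.ofReal_sum,
    sum_familyWeight_left, linEntropy_diagonal_ofReal, sum_sq_single_add_const, Fintype.card_fin]
  field_simp
  ring

theorem linEntropy_familyState :
    linEntropy (familyState i₀ k₀ α β) = (dB - 1) / dB * (2 * α - α ^ 2)
      + (dA - 1) / dA * (2 * β - β ^ 2) - 2 * ((dA - 1) / dA) * ((dB - 1) / dB) * α * β := by
  have : (dA : ℝ) ≠ 0 := by exact_mod_cast i₀.pos.ne'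
  have : (dB : ℝ) ≠ 0 := by exact_mod_cast k₀.pos.ne'
  rw [familyState_eq_diagonal, linEntropy_diagonal_ofReal, sum_sq_familyWeight]
  field_simp
  ring

end Family

/-- For the family
`ρ(α,β) = α (|0⟩⟨0| ⊗ 𝟙/d_B) + β (𝟙/d_A ⊗ |0⟩⟨0|) + (1-α-β)|00⟩⟨00|`
the linear entropies are as stated and saturate dimensionally sharp subadditivity. -/
theorem family_saturates_DSSA (dA dB : ℕ) (hA : 2 ≤ dA) (hB : 2 ≤ dB)
    (α β : ℝ) (hα : 0 ≤ α) (hβ : 0 ≤ β) (hαβ : α + β ≤ 1)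
    (DA DB : ℝ) (hDA : DA = ((dA : ℝ) - 1) / dA) (hDB : DB = ((dB : ℝ) - 1) / dB)
    (ρ : Matrix (Fin dA × Fin dB) (Fin dA × Fin dB) ℂ)
    (hρdef : ρ = (α : ℂ) •
        ((Matrix.single (⟨0, by omega⟩ : Fin dA) (⟨0, by omega⟩ : Fin dA) (1 : ℂ)) ⊗ₖ
          ((dB : ℂ)⁻¹ • (1 : Matrix (Fin dB) (Fin dB) ℂ)))
      + (β : ℂ) •
        (((dA : ℂ)⁻¹ • (1 : Matrix (Fin dA) (Fin dA) ℂ)) ⊗ₖ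
          (Matrix.single (⟨0, by omega⟩ : Fin dB) (⟨0, by omega⟩ : Fin dB) (1 : ℂ)))
      + ((1 - α - β : ℝ) : ℂ) •
        (Matrix.single
          ((⟨0, by omega⟩ : Fin dA), (⟨0, by omega⟩ : Fin dB))
          ((⟨0, by omega⟩ : Fin dA), (⟨0, by omega⟩ : Fin dB)) (1 : ℂ))) :
    linEntropy (ptraceB ρ) = DA * (2 * β - β ^ 2) ∧
    linEntropy (ptraceA ρ) = DB * (2 * α - α ^ 2) ∧
    linEntropy ρ = DB * (2 * α - α ^ 2) + DA * (2 * β - β ^ 2) - 2 * DA * DB * α * β ∧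
    linEntropy ρ = linEntropy (ptraceB ρ) + linEntropy (ptraceA ρ)
      - 2 * DA * DB * (1 - Real.sqrt (1 - linEntropy (ptraceB ρ) / DA))
        * (1 - Real.sqrt (1 - linEntropy (ptraceA ρ) / DB)) := by
  subst hDA hDB
  obtain rfl : ρ = familyState ⟨0, by omega⟩ ⟨0, by omega⟩ α β := hρdef
  have hdA : (2 : ℝ) ≤ dA := by exact_mod_cast hA
  have hdB : (2 : ℝ) ≤ dB := by exact_mod_cast hB
  rw [linEntropy_ptraceB_familyState, linEntropy_ptraceA_familyState, linEntropy_familyState,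
    one_sub_sqrt_one_sub_mul_div (div_pos (by linarith) (by linarith)).ne' (by linarith),
    one_sub_sqrt_one_sub_mul_div (div_pos (by linarith) (by linarith)).ne' (by linarith)]
  exact ⟨rfl, rfl, rfl, by ring⟩
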